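/- Let G be a simple graph, M a maximal matching of G, and U the set of vertices of V(M) having degree at least k+1 in G. If |U| ≤ k and the graph G − U has a vertex cover S of size at most k − |U|, then S ∪ U is a vertex cover of G of size at most k; conversely, if G has a vertex cover of size at most k, then G − U has a vertex cover of size at most k − |U|. -/
import Mathlib


/-- `S` is a vertex cover of `G`: every edge has an endpoint in `S`. -/
def IsVCov {V : Type*} (G : SimpleGraph V) (S : Set V) : Prop :=
  ∀ ⦃u v : V⦄, G.Adj u v → u ∈ S ∨ v ∈ S

/-- `M` is a matching of `G`: a set of edges of `G` that are pairwise vertex-disjoint. -/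
def IsMatch {V : Type*} (G : SimpleGraph V) (M : Set (Sym2 V)) : Prop :=
  M ⊆ G.edgeSet ∧ ∀ e ∈ M, ∀ f ∈ M, e ≠ f → ∀ v : V, ¬(v ∈ e ∧ v ∈ f)

/-- `M` is a maximal matching of `G`: no edge of `G` can be added keeping it a matching. -/
def IsMaximalMatch {V : Type*} (G : SimpleGraph V) (M : Set (Sym2 V)) : Prop :=
  IsMatch G M ∧ ∀ e ∈ G.edgeSet, e ∉ M → ¬ IsMatch G (insert e M)

/-- The set of endpoints of edges of `M`. -/
def matchVerts {V : Type*} (M : Set (Sym2 V)) : Set V := {v | ∃ e ∈ M, v ∈ e}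

theorem stmt_18 {V : Type*} [Fintype V] (G : SimpleGraph V) (k : ℕ) (M : Set (Sym2 V))
    (hM : IsMaximalMatch G M) (U : Set V)
    (hU : U = {v | v ∈ matchVerts M ∧ k + 1 ≤ (G.neighborSet v).ncard})
    (hUk : U.ncard ≤ k) :
    (∀ S : Set (Uᶜ : Set V), IsVCov (G.induce (Uᶜ : Set V)) S → S.ncard ≤ k - U.ncard →
        IsVCov G ((Subtype.val '' S) ∪ U) ∧ ((Subtype.val '' S) ∪ U).ncard ≤ k) ∧
      ((∃ S : Set V, IsVCov G S ∧ S.ncard ≤ k) →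
        ∃ T : Set (Uᶜ : Set V), IsVCov (G.induce (Uᶜ : Set V)) T ∧
          T.ncard ≤ k - U.ncard) := by
  constructor
  · intro S hS hSk
    constructor
    · intro u v huv
      by_cases hu : u ∈ U
      · exact Or.inl (Or.inr hu)
      by_cases hv : v ∈ U
      · exact Or.inr (Or.inr hv)
      · rcases hS (show (G.induce (Uᶜ : Set V)).Adj ⟨u, hu⟩ ⟨v, hv⟩ from huv) with h | h
        · exact Or.inl (Or.inl ⟨⟨u, hu⟩, h, rfl⟩)
        · exact Or.inr (Or.inl ⟨⟨v, hv⟩, h, rfl⟩)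
    · calc ((Subtype.val '' S) ∪ U).ncard ≤ (Subtype.val '' S).ncard + U.ncard :=
            Set.ncard_union_le _ _
        _ = S.ncard + U.ncard := by
            rw [Set.ncard_image_of_injective _ Subtype.val_injective]
        _ ≤ (k - U.ncard) + U.ncard := by omega
        _ = k := Nat.sub_add_cancel hUk
  · rintro ⟨S, hS, hSk⟩
    have hUS : U ⊆ S := by
      intro v hv
      rw [hU] at hv
      obtain ⟨-, hdeg⟩ := hv
      by_contra hvS
      have hnb : G.neighborSet v ⊆ S := by
        intro w hw
        rcases hS hw with h | h
        · exact absurd h hvS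
        · exact h
      have := Set.ncard_le_ncard hnb (Set.toFinite S)
      omega
    refine ⟨{x | (x : V) ∈ S}, ?_, ?_⟩
    · intro u v huv
      rcases hS huv with h | h
      · exact Or.inl h
      · exact Or.inr h
    · have himg : Subtype.val '' {x : (Uᶜ : Set V) | (x : V) ∈ S} = S \ U := by
        ext x
        constructor
        · rintro ⟨⟨y, hy⟩, hyS, rfl⟩; exact ⟨hyS, hy⟩
        · rintro ⟨hxS, hxU⟩; exact ⟨⟨x, hxU⟩, hxS, rfl⟩
      have h1 : ({x : (Uᶜ : Set V) | (x : V) ∈ S}).ncard = (S \ U).ncard := by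
        rw [← himg, Set.ncard_image_of_injective _ Subtype.val_injective]
      have h2 : (S ∩ U).ncard + (S \ U).ncard = S.ncard :=
        Set.ncard_inter_add_ncard_diff_eq_ncard S U (Set.toFinite S)
      have h3 : U.ncard ≤ (S ∩ U).ncard := by
        apply Set.ncard_le_ncard _ (Set.toFinite _)
        exact fun x hx => ⟨hUS hx, hx⟩
      omega
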